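/- arXiv:2010.09862 — 2 statements merged into one kernel-verified Lean document; each statement's English description precedes it below -/
import Mathlib

section
/- For every integer n ≥ 1 and every real number x with |x| > 1, the n-th derivative of the inverse hyperbolic cotangent function satisfies Dₓⁿ (arctanh(1/x)) = ((n-1)! / (1-x²)ⁿ) · Σ_{k=0}^{⌊(n-1)/2⌋} C(n, 2k+1) x^{n-2k-1}, i.e. the same closed-form formula as the n-th derivative of the inverse hyperbolic tangent function. -/
/-- The real inverse hyperbolic tangent function, `arctanh x = (1/2) ln((1+x)/(1-x))`. -/
noncomputable def arctanh (x : ℝ) : ℝ := (1 / 2) * Real.log ((1 + x) / (1 - x))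

/-!
Since `Real.log` is even, `(1 + 1/y)/(1 - 1/y) = -(1 + y)/(1 - y)` gives `arctanh (1/y) = arctanh y`
for every real `y`, so it suffices to differentiate `arctanh`. Its derivative is
`((1 + x)⁻¹ + (1 - x)⁻¹)/2`, whose iterated derivatives are explicit; over the common denominator
`(1 - x²)ⁿ` the numerator is `((1 + x)ⁿ - (x - 1)ⁿ)/2`, the odd part of the binomial expansion.
-/

open Finset
open scoped Nat

theorem arctanh_inv (x : ℝ) : arctanh x⁻¹ = arctanh x := by
  rcases eq_or_ne x 0 with rfl | hx
  · simp
  have : (1 + x⁻¹) / (1 - x⁻¹) = -((1 + x) / (1 - x)) := by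
    rw [← neg_div_neg_eq (1 + x), neg_sub, ← div_div_div_cancel_right₀ hx]
    field_simp
    ring
  rw [arctanh, arctanh, this, Real.log_neg_eq_log]

theorem one_add_ne_zero_and_one_sub_ne_zero {R : Type*} [CommRing R] {x : R} (hx : x ^ 2 ≠ 1) :
    1 + x ≠ 0 ∧ 1 - x ≠ 0 :=
  ne_zero_and_ne_zero_of_mul <| by
    rw [show (1 + x) * (1 - x) = 1 - x ^ 2 by ring]
    exact sub_ne_zero.mpr hx.symm

theorem hasDerivAt_arctanh {x : ℝ} (hx : x ^ 2 ≠ 1) :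
    HasDerivAt arctanh (((1 + x)⁻¹ + (1 - x)⁻¹) / 2) x := by
  obtain ⟨h₁, h₂⟩ := one_add_ne_zero_and_one_sub_ne_zero hx
  have hq : HasDerivAt (fun y => (1 + y) / (1 - y)) (2 / (1 - x) ^ 2) x :=
    (((hasDerivAt_id' x).const_add 1).div ((hasDerivAt_id' x).const_sub 1) h₂).congr_deriv
      (by ring)
  refine ((hq.log (div_ne_zero h₁ h₂)).const_mul (1 / 2)).congr_deriv ?_
  field_simp
  ring

theorem deriv_arctanh_eventuallyEq {x : ℝ} (hx : x ^ 2 ≠ 1) :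
    deriv arctanh =ᶠ[nhds x] fun y => ((1 + y)⁻¹ + (1 - y)⁻¹) / 2 := by
  filter_upwards [(isOpen_ne_fun (continuous_pow 2) continuous_const).mem_nhds hx] with y hy
  exact (hasDerivAt_arctanh hy).deriv

theorem iteratedDeriv_inv_one_add (n : ℕ) (x : ℝ) :
    iteratedDeriv n (fun y => (1 + y)⁻¹) x = (-1) ^ n * n ! * ((1 + x) ^ (n + 1))⁻¹ := by
  have := congr_fun (iter_deriv_inv_linear n (1 : ℝ) 1) x
  simp only [one_mul, one_pow, mul_one, add_comm _ (1 : ℝ)] at this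
  rw [iteratedDeriv_eq_iterate, this, show (-1 - n : ℤ) = -((n + 1 : ℕ) : ℤ) by push_cast; ring,
    zpow_neg, zpow_natCast]

theorem iteratedDeriv_inv_one_sub (n : ℕ) (x : ℝ) :
    iteratedDeriv n (fun y => (1 - y)⁻¹) x = n ! * ((1 - x) ^ (n + 1))⁻¹ := by
  have := congr_fun (iter_deriv_inv_linear n (-1 : ℝ) 1) x
  simp only [neg_one_mul, neg_add_eq_sub] at this
  rw [iteratedDeriv_eq_iterate, this, show (-1 - n : ℤ) = -((n + 1 : ℕ) : ℤ) by push_cast; ring,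
    zpow_neg, zpow_natCast]
  have hsign : ((-1 : ℝ)) ^ n * (-1) ^ n = 1 := by rw [← mul_pow]; norm_num
  linear_combination (n ! * ((1 - x) ^ (n + 1))⁻¹) * hsign

theorem iteratedDeriv_succ_arctanh (n : ℕ) {x : ℝ} (hx : x ^ 2 ≠ 1) :
    iteratedDeriv (n + 1) arctanh x =
      n ! * ((-1) ^ n * ((1 + x) ^ (n + 1))⁻¹ + ((1 - x) ^ (n + 1))⁻¹) / 2 := by
  obtain ⟨h₁, h₂⟩ := one_add_ne_zero_and_one_sub_ne_zero hx
  rw [iteratedDeriv_succ', (deriv_arctanh_eventuallyEq hx).iteratedDeriv_eq,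
    iteratedDeriv_div_const, iteratedDeriv_fun_add, iteratedDeriv_inv_one_add,
    iteratedDeriv_inv_one_sub]
  · ring
  · exact (contDiffAt_const.add contDiffAt_id).inv h₁
  · exact (contDiffAt_const.sub contDiffAt_id).inv h₂

theorem Finset.sum_range_filter_odd {M : Type*} [AddCommMonoid M] (f : ℕ → M) (n : ℕ) :
    ∑ m ∈ range n with Odd m, f m = ∑ k ∈ range (n / 2), f (2 * k + 1) := by
  have : {m ∈ range n | Odd m} = (range (n / 2)).image (2 * · + 1) := by
    ext m
    simp only [mem_filter, mem_range, mem_image, Nat.odd_iff]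
    constructor
    · rintro ⟨hm, hodd⟩
      exact ⟨m / 2, by omega, by omega⟩
    · rintro ⟨k, hk, rfl⟩
      omega
  rw [this, sum_image fun _ _ _ _ h => by simpa using h]

theorem one_add_pow_sub_neg_one_add_pow {R : Type*} [CommRing R] (n : ℕ) (x : R) :
    (1 + x) ^ n - (-1 + x) ^ n =
      2 * ∑ k ∈ range ((n + 1) / 2), (n.choose (2 * k + 1) : R) * x ^ (n - 2 * k - 1) := by
  have hterm : ∀ m ∈ range (n + 1),
      1 ^ m * x ^ (n - m) * n.choose m - (-1) ^ m * x ^ (n - m) * n.choose m =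
        if Odd m then 2 * ((n.choose m : R) * x ^ (n - m)) else 0 := by
    intro m _
    rcases Nat.even_or_odd m with h | h
    · simp [h.neg_one_pow, Nat.not_odd_iff_even.mpr h]
    · simp only [h.neg_one_pow, h, if_true, one_pow]
      ring
  rw [add_pow, add_pow, ← sum_sub_distrib, sum_congr rfl hterm, ← sum_filter,
    sum_range_filter_odd, mul_sum]
  simp only [Nat.sub_sub]

theorem iteratedDeriv_arctanh {n : ℕ} (hn : 1 ≤ n) {x : ℝ} (hx : x ^ 2 ≠ 1) :
    iteratedDeriv n arctanh x =
      ((n - 1)! / (1 - x ^ 2) ^ n) *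
        ∑ k ∈ range ((n - 1) / 2 + 1), (n.choose (2 * k + 1) : ℝ) * x ^ (n - 2 * k - 1) := by
  obtain ⟨m, rfl⟩ : ∃ m, n = m + 1 := ⟨n - 1, by omega⟩
  obtain ⟨h₁, h₂⟩ := one_add_ne_zero_and_one_sub_ne_zero hx
  have hsum := one_add_pow_sub_neg_one_add_pow (m + 1) x
  rw [show (m + 1 + 1) / 2 = m / 2 + 1 by omega] at hsum
  have hneg : (-1 + x) ^ (m + 1) = -((-1) ^ m * (1 - x) ^ (m + 1)) := by
    rw [show -1 + x = -1 * (1 - x) by ring, mul_pow, pow_succ]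
    ring
  rw [iteratedDeriv_succ_arctanh m hx, Nat.add_sub_cancel,
    ← mul_div_cancel_left₀ (∑ k ∈ _, _) two_ne_zero, ← hsum, hneg,
    show 1 - x ^ 2 = (1 + x) * (1 - x) by ring, mul_pow]
  field_simp
  ring

/-- For every integer `n ≥ 1` and every real `x` with `|x| > 1`,
`Dₓⁿ arccoth(x) = ((n-1)! / (1-x²)ⁿ) · Σ_{k=0}^{⌊(n-1)/2⌋} C(n,2k+1) x^(n-2k-1)`,
where `arccoth x = arctanh (1/x)`. -/
theorem iteratedDeriv_arccoth_eq_polynomial (n : ℕ) (hn : 1 ≤ n) (x : ℝ) (hx : 1 < |x|) :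
    iteratedDeriv n (fun y => arctanh (1 / y)) x =
      ((Nat.factorial (n - 1) : ℝ) / (1 - x ^ 2) ^ n) *
        ∑ k ∈ Finset.range ((n - 1) / 2 + 1),
          (n.choose (2 * k + 1) : ℝ) * x ^ (n - 2 * k - 1) := by
  simp only [one_div, arctanh_inv]
  exact iteratedDeriv_arctanh hn ((one_lt_sq_iff_one_lt_abs x).mpr hx).ne'
end

section
/- Let T : ℕ × ℕ → ℤ satisfy T(0,k) = 1 if k = 1 and T(0,k) = 0 otherwise; T(n,0) = T(n−1,1) for n ≥ 1; and T(n,k) = (k−1)·T(n−1,k−1) + (k+1)·T(n−1,k+1) for n ≥ 1, k ≥ 1. Then for every integer n ≥ 0 and every real number x, Dₓⁿ tanh(x) = (−1)ⁿ · Σ_{k=0}^{⌊(n+1)/2⌋} (−1)ᵏ T(n, n−2k+1) · tanh(x)^{n−2k+1}. -/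
/-!
Since `tanh' = 1 - tanh ^ 2`, the `n`-th derivative of `tanh` is `Pₙ(tanh)` for the polynomials
`P₀ = X`, `Pₙ₊₁ = Pₙ' (1 - X²)`, while the recurrence for `T` says that `T (n, ·)` are the
coefficients of the tangent polynomials `Q₀ = X`, `Qₙ₊₁ = Qₙ' (1 + X²)`. Mirroring
`tanh x = -i tan (i x)`, the substitution `X ↦ i X` intertwines the two recursions:
`i Pₙ(X) = iⁿ Qₙ(i X)`. Comparing coefficients, `Pₙ` has coefficient `(-1)ⁿ⁺ʲ T (n, n + 1 - 2j)`
in degree `n + 1 - 2j` and none of degree `≢ n + 1 (mod 2)`.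
-/

open Polynomial Finset

theorem Real.hasDerivAt_tanh (x : ℝ) : HasDerivAt tanh (1 - tanh x ^ 2) x := by
  have h := (hasDerivAt_sinh x).div (hasDerivAt_cosh x) (cosh_pos x).ne'
  rw [show sinh / cosh = tanh from funext fun y => (tanh_eq_sinh_div_cosh y).symm] at h
  refine h.congr_deriv ?_
  rw [tanh_eq_sinh_div_cosh]
  field_simp

theorem Finset.sum_range_succ_eq_sum_range_sub_two_mul {M : Type*} [AddCommMonoid M] (m : ℕ)
    (f : ℕ → M) (hf : ∀ k ≤ m, Odd (m + k) → f k = 0) :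
    ∑ k ∈ range (m + 1), f k = ∑ j ∈ range (m / 2 + 1), f (m - 2 * j) := by
  rw [← sum_image (g := fun j => m - 2 * j) (by intro a ha b hb h; simp only [coe_range, Set.mem_Iio] at ha hb h; omega)]
  symm
  apply sum_subset
  · intro k
    simp only [mem_image, mem_range]
    omega
  · intro k hk hnot
    simp only [mem_range, mem_image, not_exists, not_and] at hk hnot
    refine hf k (by omega) (Nat.odd_iff.mpr ?_)
    by_contra h
    exact hnot ((m - k) / 2) (by omega) (by omega)

namespace Polynomial

variable {R : Type*} [CommSemiring R] (p : R[X])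

theorem coeff_derivative_mul_one_add_X_sq_zero :
    (derivative p * (1 + X ^ 2)).coeff 0 = p.coeff 1 := by
  simp [mul_add, coeff_derivative]

theorem coeff_derivative_mul_one_add_X_sq_succ (k : ℕ) :
    (derivative p * (1 + X ^ 2)).coeff (k + 1) = (k + 2) * p.coeff (k + 2) + k * p.coeff k := by
  rcases k with _ | k
  · simp [mul_add, coeff_derivative, coeff_mul_X_pow', two_mul]
  · rw [mul_add, mul_one, coeff_add, show k + 1 + 1 = k + 2 from rfl, coeff_mul_X_pow,
      coeff_derivative, coeff_derivative]
    push_cast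
    ring

end Polynomial

noncomputable def tanPoly : ℕ → ℤ[X]
  | 0 => X
  | n + 1 => derivative (tanPoly n) * (1 + X ^ 2)

noncomputable def tanhPoly : ℕ → ℤ[X]
  | 0 => X
  | n + 1 => derivative (tanhPoly n) * (1 - X ^ 2)

theorem coeff_tanPoly (T : ℕ × ℕ → ℤ)
    (hT0 : ∀ k, T (0, k) = if k = 1 then 1 else 0)
    (hTn0 : ∀ n, 1 ≤ n → T (n, 0) = T (n - 1, 1))
    (hTnk : ∀ n k, 1 ≤ n → 1 ≤ k →
      T (n, k) = ((k : ℤ) - 1) * T (n - 1, k - 1) + ((k : ℤ) + 1) * T (n - 1, k + 1))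
    (n k : ℕ) : (tanPoly n).coeff k = T (n, k) := by
  induction n generalizing k with
  | zero => simp [hT0, tanPoly, coeff_X, eq_comm]
  | succ n ih =>
    rcases k with _ | k
    · rw [hTn0 _ n.succ_pos, tanPoly, coeff_derivative_mul_one_add_X_sq_zero, ih]
      rfl
    · rw [hTnk _ _ n.succ_pos k.succ_pos, tanPoly, coeff_derivative_mul_one_add_X_sq_succ, ih, ih]
      push_cast
      ring

theorem map_tanhPoly_mul_C {R : Type*} [CommRing R] {i : R} (hi : i ^ 2 = -1) (n : ℕ) :
    (tanhPoly n).map (Int.castRingHom R) * C i =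
      C (i ^ n) * ((tanPoly n).map (Int.castRingHom R)).comp (C i * X) := by
  induction n with
  | zero => simp [tanhPoly, tanPoly]
  | succ n ih =>
    calc (tanhPoly (n + 1)).map (Int.castRingHom R) * C i
        = derivative ((tanhPoly n).map (Int.castRingHom R) * C i) * (1 - X ^ 2) := by
          simp only [tanhPoly, Polynomial.map_mul, Polynomial.map_sub, Polynomial.map_one,
            Polynomial.map_pow, map_X, derivative_mul, derivative_map, derivative_C, mul_zero,
            add_zero]
          ring
      _ = C (i ^ n) * (C i * (derivative ((tanPoly n).map (Int.castRingHom R))).comp (C i * X))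
          * (1 - X ^ 2) := by
          rw [ih, derivative_C_mul, derivative_comp, derivative_C_mul, derivative_X, mul_one]
      _ = C (i ^ (n + 1)) * ((tanPoly (n + 1)).map (Int.castRingHom R)).comp (C i * X) := by
          have hC : C i ^ 2 = -1 := by rw [← C_pow, hi, C_neg, C_1]
          simp only [map_pow, derivative_map, tanPoly, Polynomial.map_mul, Polynomial.map_add,
            Polynomial.map_one, Polynomial.map_pow, map_X, mul_comp, add_comp, one_comp, pow_comp,
            X_comp, mul_pow, hC]
          ring

open Complex in
theorem coeff_tanhPoly_mul_I (n k : ℕ) :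
    ((tanhPoly n).coeff k : ℂ) * I = I ^ (n + k) * (tanPoly n).coeff k := by
  have h := congrArg (coeff · k) (map_tanhPoly_mul_C I_sq n)
  simp only [coeff_mul_C, coeff_C_mul, comp_C_mul_X_coeff, coeff_map, eq_intCast] at h
  rw [h, pow_add]
  ring

theorem coeff_tanhPoly_eq_zero_of_even {n k : ℕ} (h : Even (n + k)) :
    (tanhPoly n).coeff k = 0 := by
  obtain ⟨m, hm⟩ := h
  have h := coeff_tanhPoly_mul_I n k
  rw [hm, ← two_mul, pow_mul, Complex.I_sq] at h
  have him : ((-1 : ℂ) ^ m).im = 0 := by norm_cast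
  simpa [him] using congrArg Complex.im h

open Complex in
theorem coeff_tanhPoly_add_one_sub_two_mul {n j : ℕ} (h : 2 * j ≤ n + 1) :
    (tanhPoly n).coeff (n + 1 - 2 * j) = (-1) ^ (n + j) * (tanPoly n).coeff (n + 1 - 2 * j) := by
  have hexp : I ^ (n + (n + 1 - 2 * j)) = (-1) ^ (n + j) * I := by
    calc I ^ (n + (n + 1 - 2 * j)) = I ^ (n + (n + 1 - 2 * j)) * I ^ (4 * j) := by
          rw [pow_mul, I_pow_four, one_pow, mul_one]
      _ = I ^ (2 * (n + j)) * I := by rw [← pow_add, ← pow_succ]; congr 1; omega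
      _ = (-1) ^ (n + j) * I := by rw [pow_mul, I_sq]
  apply Int.cast_injective (α := ℂ)
  apply mul_right_cancel₀ I_ne_zero
  rw [coeff_tanhPoly_mul_I, hexp]
  push_cast
  ring

theorem natDegree_tanhPoly_le (n : ℕ) : (tanhPoly n).natDegree ≤ n + 1 := by
  induction n with
  | zero => simp [tanhPoly]
  | succ n ih =>
    refine natDegree_mul_le.trans ?_
    have := natDegree_derivative_le (tanhPoly n)
    have h2 : (1 - X ^ 2 : ℤ[X]).natDegree ≤ 2 := by compute_degree
    omega

theorem iteratedDeriv_tanh_eq_aeval (n : ℕ) (x : ℝ) :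
    iteratedDeriv n Real.tanh x = aeval (Real.tanh x) (tanhPoly n) := by
  induction n generalizing x with
  | zero => simp [tanhPoly]
  | succ n ih =>
    rw [iteratedDeriv_succ, funext ih]
    refine (((tanhPoly n).hasDerivAt_aeval _).comp x (Real.hasDerivAt_tanh x)).deriv.trans ?_
    simp [tanhPoly]

/-- Higher derivatives of the hyperbolic tangent function as polynomials in `tanh`, with the
tangent-polynomial coefficients `T` given by their recurrence. -/
theorem iteratedDeriv_tanh_eq_sum (T : ℕ × ℕ → ℤ)
    (hT0 : ∀ k, T (0, k) = if k = 1 then 1 else 0)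
    (hTn0 : ∀ n, 1 ≤ n → T (n, 0) = T (n - 1, 1))
    (hTnk : ∀ n k, 1 ≤ n → 1 ≤ k →
      T (n, k) = ((k : ℤ) - 1) * T (n - 1, k - 1) + ((k : ℤ) + 1) * T (n - 1, k + 1))
    (n : ℕ) (x : ℝ) :
    iteratedDeriv n Real.tanh x =
      (-1) ^ n * ∑ k ∈ Finset.range ((n + 1) / 2 + 1),
        (-1) ^ k * (T (n, n + 1 - 2 * k) : ℝ) * Real.tanh x ^ (n + 1 - 2 * k) := by
  have hdeg : (tanhPoly n).natDegree < n + 1 + 1 := Nat.lt_succ_of_le (natDegree_tanhPoly_le n)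
  rw [iteratedDeriv_tanh_eq_aeval, aeval_eq_sum_range' hdeg,
    sum_range_succ_eq_sum_range_sub_two_mul, mul_sum]
  · refine sum_congr rfl fun j hj => ?_
    rw [coeff_tanhPoly_add_one_sub_two_mul (by rw [mem_range] at hj; omega),
      coeff_tanPoly T hT0 hTn0 hTnk]
    ring
  · intro k _ hodd
    rw [coeff_tanhPoly_eq_zero_of_even (by grind), zero_smul]
end
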